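/- arXiv:2310.06000 — 2 statements merged into one kernel-verified Lean document; each statement's English description precedes it below -/
import Mathlib

section
/- The Shapley value satisfies the symmetry axiom: if players i and j satisfy ξ(ω ∪ {i}) = ξ(ω ∪ {j}) for all coalitions ω ⊆ Ω \ {i, j}, then their Shapley values are equal. -/
/-!
Symmetry is a special case of anonymity: relabelling the players by a permutation `σ` moves the
Shapley value of `i` to `σ i`, and the hypothesis says exactly that `ξ` is invariant under the
transposition of `i` and `j`.
-/

open Finset

/-- Combination-form Shapley value of player `i` with player set all of `α`. -/
noncomputable def shapley {α : Type*} [Fintype α] [DecidableEq α]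
    (ξ : Finset α → ℝ) (i : α) : ℝ :=
  (Fintype.card α : ℝ)⁻¹ *
    ∑ ω ∈ (Finset.univ.erase i).powerset,
      ((Fintype.card α - 1).choose ω.card : ℝ)⁻¹ * (ξ (insert i ω) - ξ ω)

namespace Finset

variable {α : Type*} [DecidableEq α] {i j : α} {s : Finset α}

theorem map_swap_eq_self (h : i ∈ s ↔ j ∈ s) : s.map (Equiv.swap i j).toEmbedding = s := by
  ext x
  rw [mem_map_equiv, Equiv.symm_swap, Equiv.swap_apply_def]
  split_ifs <;> simp_all

theorem map_swap_of_mem_of_notMem (hi : i ∈ s) (hj : j ∉ s) :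
    s.map (Equiv.swap i j).toEmbedding = insert j (s.erase i) := by
  conv_lhs => rw [← insert_erase hi]
  rw [map_insert, map_swap_eq_self (by simp [hj]), Equiv.coe_toEmbedding, Equiv.swap_apply_left]

end Finset

theorem apply_map_swap_eq_of_insert_eq {α β : Type*} [DecidableEq α] {ξ : Finset α → β}
    {i j : α} (h : ∀ ω, i ∉ ω → j ∉ ω → ξ (insert i ω) = ξ (insert j ω)) (s : Finset α) :
    ξ (s.map (Equiv.swap i j).toEmbedding) = ξ s := by
  by_cases hi : i ∈ s <;> by_cases hj : j ∈ s
  · rw [map_swap_eq_self (iff_of_true hi hj)]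
  · rw [map_swap_of_mem_of_notMem hi hj, ← h _ (notMem_erase i s) (by simp [hj]),
      insert_erase hi]
  · rw [Equiv.swap_comm, map_swap_of_mem_of_notMem hj hi, h _ (by simp [hi]) (notMem_erase j s),
      insert_erase hj]
  · rw [map_swap_eq_self (iff_of_false hi hj)]

theorem shapley_map_perm {α : Type*} [Fintype α] [DecidableEq α]
    (ξ : Finset α → ℝ) (σ : Equiv.Perm α) (i : α) :
    shapley (fun s => ξ (s.map σ.toEmbedding)) i = shapley ξ (σ i) := by
  unfold shapley
  congr 1
  refine sum_nbij' (·.map σ.toEmbedding) (·.map σ.symm.toEmbedding) ?_ ?_ ?_ ?_ ?_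
  · intro ω
    simp [subset_erase]
  · intro ω
    simp [subset_erase]
  · intro ω _
    simp [map_map]
  · intro ω _
    simp [map_map]
  · intro ω _
    simp [map_insert]

theorem shapley_symmetry_general {α : Type*} [Fintype α] [DecidableEq α]
    (ξ : Finset α → ℝ) (i j : α)
    (h : ∀ ω ∈ ((Finset.univ.erase i).erase j).powerset,
      ξ (insert i ω) = ξ (insert j ω)) :
    shapley ξ i = shapley ξ j := by
  have hswap : ∀ ω, i ∉ ω → j ∉ ω → ξ (insert i ω) = ξ (insert j ω) := fun ω hi hj =>
    h ω (by simp [subset_erase, hi, hj])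
  calc shapley ξ i = shapley (fun s => ξ (s.map (Equiv.swap i j).toEmbedding)) i := by
        simp only [apply_map_swap_eq_of_insert_eq hswap]
    _ = shapley ξ j := by rw [shapley_map_perm, Equiv.swap_apply_left]

/-- Symmetry axiom of the Shapley value. -/
theorem shapley_symmetry {α : Type*} [Fintype α] [DecidableEq α]
    (ξ : Finset α → ℝ) (i j : α) (hij : i ≠ j)
    (h : ∀ ω ∈ ((Finset.univ.erase i).erase j).powerset,
      ξ (insert i ω) = ξ (insert j ω)) :
    shapley ξ i = shapley ξ j :=
  shapley_symmetry_general ξ i j h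
end

section
/- In least-squares linear regression, if a replicate feature is formed as x_{2_k}^{(t)} = x_2^{(t)} + η_k^{(t)} where the noise sequence η_k satisfies ∑_t η_k^{(t)} x_j^{(t)} = 0 for all original features x_j, ∑_t η_k^{(t)} y^{(t)} = 0, ∑_t η_k^{(t)} η_l^{(t)} = 0 for l ≠ k, and ∑_t (η_k^{(t)})² > 0, then any stationary point of the squared-error loss assigns coefficient zero to every replicate (w_{2_k} = 0 for all k), while the coefficient on the original feature x_2 satisfies w_2 + ∑_k w_{2_k} equal to the solution without replicates. -/
open Finset

/-- In least-squares linear regression, replicates `x₂ + η_k` of a feature with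
in-sample white noise `η_k` receive zero coefficient at any stationary point,
and `(w₁, w₂ + ∑ₖ w_{2ₖ})` is a stationary point of the problem without
replicates. -/
theorem replicates_get_zero_weight
    (T K : ℕ) (x₁ x₂ y : Fin T → ℝ) (η : Fin K → Fin T → ℝ)
    -- white-noise orthogonality conditions
    (hηx₁ : ∀ k, ∑ t, η k t * x₁ t = 0)
    (hηx₂ : ∀ k, ∑ t, η k t * x₂ t = 0)
    (hηy : ∀ k, ∑ t, η k t * y t = 0)
    (hηη : ∀ k l, k ≠ l → ∑ t, η k t * η l t = 0)
    (hηpos : ∀ k, 0 < ∑ t, (η k t) ^ 2)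
    -- a stationary point of the squared-error loss with replicates
    (w₁ w₂ : ℝ) (wr : Fin K → ℝ)
    (ε : Fin T → ℝ)
    (hε : ∀ t, ε t = w₁ * x₁ t + w₂ * x₂ t + (∑ k, wr k * (x₂ t + η k t)) - y t)
    (hstat₁ : ∑ t, ε t * x₁ t = 0)
    (hstat₂ : ∑ t, ε t * x₂ t = 0)
    (hstatr : ∀ k, ∑ t, ε t * (x₂ t + η k t) = 0) :
    (∀ k, wr k = 0) ∧
    (∑ t, (w₁ * x₁ t + (w₂ + ∑ k, wr k) * x₂ t - y t) * x₁ t = 0 ∧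
     ∑ t, (w₁ * x₁ t + (w₂ + ∑ k, wr k) * x₂ t - y t) * x₂ t = 0) := by
  have hwr : ∀ k, wr k = 0 := by
    intro k
    have h1 : ∑ t, ε t * η k t = 0 := by
      have h := hstatr k
      have : ∑ t, ε t * (x₂ t + η k t) = (∑ t, ε t * x₂ t) + ∑ t, ε t * η k t := by
        rw [← Finset.sum_add_distrib]; exact Finset.sum_congr rfl fun t _ => by ring
      rw [this, hstat₂, zero_add] at h
      exact h
    have h2 : ∑ t, ε t * η k t = wr k * ∑ t, (η k t) ^ 2 := by
      have step : ∀ t, ε t * η k t =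
          w₁ * (η k t * x₁ t) + w₂ * (η k t * x₂ t)
            + (∑ l, wr l * (η k t * x₂ t + η l t * η k t)) - η k t * y t := by
        intro t
        rw [hε t]
        have hS : (∑ l, wr l * (x₂ t + η l t)) * η k t
            = ∑ l, wr l * (η k t * x₂ t + η l t * η k t) := by
          rw [Finset.sum_mul]
          exact Finset.sum_congr rfl fun l _ => by ring
        rw [sub_mul, add_mul, add_mul, hS]
        ring
      calc ∑ t, ε t * η k t
          = (w₁ * ∑ t, η k t * x₁ t) + (w₂ * ∑ t, η k t * x₂ t)
            + (∑ l, wr l * ((∑ t, η k t * x₂ t) + ∑ t, η l t * η k t))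
            - ∑ t, η k t * y t := by
            simp only [step, Finset.sum_sub_distrib, Finset.sum_add_distrib,
              ← Finset.mul_sum]
            rw [Finset.sum_comm]
            congr 1
            congr 1
            exact Finset.sum_congr rfl fun l _ => by
              rw [← Finset.mul_sum, Finset.sum_add_distrib]
        _ = ∑ l, wr l * ∑ t, η l t * η k t := by
            rw [hηx₁, hηx₂, hηy]
            simp [Finset.mul_sum]
        _ = wr k * ∑ t, (η k t) ^ 2 := by
            rw [Finset.sum_eq_single k]
            · congr 1; exact Finset.sum_congr rfl fun t _ => by ring
            · intro l _ hl
              rw [hηη l k hl, mul_zero]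
            · simp
    have := (hηpos k).ne'
    have := h2.symm.trans h1
    rcases mul_eq_zero.mp this with h | h
    · exact h
    · exact absurd h (hηpos k).ne'
  refine ⟨hwr, ?_, ?_⟩
  · have : ∀ t, ε t = w₁ * x₁ t + (w₂ + ∑ k, wr k) * x₂ t - y t := by
      intro t
      rw [hε t]
      simp only [hwr, zero_mul, Finset.sum_const_zero]
      ring
    rw [← hstat₁]
    exact Finset.sum_congr rfl fun t _ => by rw [this t]
  · have : ∀ t, ε t = w₁ * x₁ t + (w₂ + ∑ k, wr k) * x₂ t - y t := by
      intro t
      rw [hε t]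
      simp only [hwr, zero_mul, Finset.sum_const_zero]
      ring
    rw [← hstat₂]
    exact Finset.sum_congr rfl fun t _ => by rw [this t]
end
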